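/- arXiv:1405.6304 — 5 statements merged into one kernel-verified Lean document; each statement's English description precedes it below -/
import Mathlib

section
/- Let q ∈ (0,1), a > 0, F : ℝ → ℝ continuous, and suppose x, x̃ : [qa, ∞) → ℝ are continuous, agree on [qa, a], and both satisfy x(t) = x(a) + ∫_a^t F(x(qs)) ds for t ≥ a. Then x = x̃ on [qa, ∞). -/
/-- Uniqueness: two continuous solutions of the pantograph equation agreeing on
the initial interval [qa, a] agree on all of [qa, ∞). -/
theorem pantograph_uniqueness
    (q a : ℝ) (hq : 0 < q) (hq1 : q < 1) (ha : 0 < a)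
    (F : ℝ → ℝ) (hF : Continuous F)
    (x y : ℝ → ℝ)
    (hx : ContinuousOn x (Set.Ici (q * a)))
    (hy : ContinuousOn y (Set.Ici (q * a)))
    (hinit : ∀ t ∈ Set.Icc (q * a) a, x t = y t)
    (hxeq : ∀ t, a ≤ t → x t = x a + ∫ s in a..t, F (x (q * s)))
    (hyeq : ∀ t, a ≤ t → y t = y a + ∫ s in a..t, F (y (q * s))) :
    Set.EqOn x y (Set.Ici (q * a)) := by
  have hqa : q * a ≤ a := by nlinarith
  have key : ∀ n : ℕ, ∀ t ∈ Set.Icc (q * a) (a / q ^ n), x t = y t := by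
    intro n
    induction n with
    | zero => intro t ht; exact hinit t (by simpa using ht)
    | succ n ih =>
      intro t ht
      rcases le_or_gt t a with h | h
      · exact hinit t ⟨ht.1, h⟩
      · have hta : a ≤ t := h.le
        rw [hxeq t hta, hyeq t hta, hinit a ⟨hqa, le_refl a⟩]
        congr 1
        apply intervalIntegral.integral_congr
        intro s hs
        rw [Set.uIcc_of_le hta] at hs
        have hs1 : a ≤ s := hs.1
        have hs2 : s ≤ t := hs.2
        have hqn : (0:ℝ) < q ^ n := pow_pos hq n
        show F (x (q * s)) = F (y (q * s))
        congr 1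
        apply ih
        constructor
        · exact mul_le_mul_of_nonneg_left hs1 hq.le
        · have : q * t ≤ q * (a / q ^ (n + 1)) :=
            mul_le_mul_of_nonneg_left ht.2 hq.le
          have heq : q * (a / q ^ (n + 1)) = a / q ^ n := by
            field_simp
            ring
          calc q * s ≤ q * t := mul_le_mul_of_nonneg_left hs2 hq.le
            _ ≤ a / q ^ n := by rw [← heq]; exact this
  intro t ht
  have ht0 : (0:ℝ) < t := lt_of_lt_of_le (by positivity) ht
  obtain ⟨n, hn⟩ := exists_pow_lt_of_lt_one (div_pos ha ht0) hq1
  have : t ≤ a / q ^ n := by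
    rw [le_div_iff₀ (pow_pos hq n)]
    have := (lt_div_iff₀ ht0).mp hn
    linarith
  exact key n t ⟨ht, this⟩
end

section
/- Let q ∈ (0,1), λ > 0, and let x : [0,∞) → ℝ be the solution of x'(t) = λ x(qt) with x(0) = x₀ > 0. Then the ratio t ↦ x(t)/x(qt) is monotone increasing on (0,∞) and tends to +∞ as t → ∞. -/
/-!
Write `R t = x t / x (q t)`. Positivity of `x`, and of the gap `R (q t) - q R t`, both follow by
continuous induction: at a first zero the derivative would be positive. For the gap this is
because `R' t = l (R (q t) - q R t) / R (q t)`, so at a first zero `c` the gap has derivative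
`q R' (q c) > 0`. The same formula gives `R' > 0`. Finally, `x` is increasing, so the mean value
theorem on `[q t, t]` gives `x t - x (q t) ≥ l (1 - q) t x (q² t)`; combined with
`R (q t) ≤ R t` this yields `R t ^ 2 ≥ l (1 - q) t`.
-/

open Set Filter Topology

lemma HasDerivAt.nonpos_of_forall_le_left {f : ℝ → ℝ} {f' a c : ℝ} (hac : a < c)
    (hf : HasDerivAt f f' c) (h : ∀ t ∈ Ioo a c, f c ≤ f t) : f' ≤ 0 := by
  have hslope : Tendsto (slope f c) (𝓝[<] c) (𝓝 f') :=
    (hasDerivAt_iff_tendsto_slope.mp hf).mono_left (nhdsWithin_mono c fun _ hy ↦ ne_of_lt hy)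
  refine le_of_tendsto hslope ?_
  filter_upwards [Ioo_mem_nhdsLT hac] with t ht
  rw [slope_def_field]
  exact div_nonpos_of_nonneg_of_nonpos (sub_nonneg.mpr (h t ht)) (sub_nonpos.mpr ht.2.le)

lemma pos_of_deriv_pos_at_first_zero {f f' : ℝ → ℝ} {a : ℝ}
    (hf : ∀ t, a ≤ t → HasDerivAt f (f' t) t) (ha : 0 < f a)
    (h : ∀ c, a < c → f c = 0 → (∀ t ∈ Ico a c, 0 < f t) → 0 < f' c) :
    ∀ t, a ≤ t → 0 < f t := by
  by_contra! ⟨T, haT, hT⟩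
  have hcont : ∀ b, ContinuousOn f (Icc a b) := fun b t ht ↦
    (hf t ht.1).continuousAt.continuousWithinAt
  have hS : IsCompact (Icc a T ∩ f ⁻¹' Iic 0) := isCompact_Icc.of_isClosed_subset
    ((hcont T).preimage_isClosed_of_isClosed isClosed_Icc isClosed_Iic) inter_subset_left
  obtain ⟨c, ⟨⟨hac, hcT⟩, hc⟩, hleast⟩ := hS.exists_isLeast ⟨T, ⟨haT, le_rfl⟩, hT⟩
  have hbefore : ∀ t ∈ Ico a c, 0 < f t := fun t ht ↦ by
    by_contra! hft
    exact (hleast ⟨⟨ht.1, ht.2.le.trans hcT⟩, hft⟩).not_gt ht.2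
  have hac' : a < c := hac.lt_of_ne (by rintro rfl; exact (not_le.mpr ha) hc)
  have hzero : f c = 0 := by
    obtain ⟨s, hs, hfs⟩ := intermediate_value_Icc' hac (hcont c) ⟨hc, ha.le⟩
    rcases hs.2.lt_or_eq with hsc | rfl
    · exact absurd hfs (hbefore s ⟨hs.1, hsc⟩).ne'
    · exact hfs
  refine (h c hac' hzero hbefore).not_ge ((hf c hac).nonpos_of_forall_le_left hac' fun t ht ↦ ?_)
  exact hzero ▸ (hbefore t ⟨ht.1.le, ht.2⟩).le

namespace Pantograph

def IsSolution (q l : ℝ) (x : ℝ → ℝ) : Prop := ∀ t, 0 ≤ t → HasDerivAt x (l * x (q * t)) t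

noncomputable def ratio (q : ℝ) (x : ℝ → ℝ) (t : ℝ) : ℝ := x t / x (q * t)

variable {q l : ℝ} {x : ℝ → ℝ}

theorem IsSolution.pos (hx : IsSolution q l x) (hq0 : 0 ≤ q) (hq1 : q < 1) (hl : 0 < l)
    (hx0 : 0 < x 0) : ∀ t, 0 ≤ t → 0 < x t :=
  pos_of_deriv_pos_at_first_zero hx hx0 fun _ hc _ hbefore ↦
    mul_pos hl (hbefore _ ⟨mul_nonneg hq0 hc.le, mul_lt_of_lt_one_left hc hq1⟩)

theorem IsSolution.monotoneOn (hx : IsSolution q l x) (hq0 : 0 ≤ q) (hl : 0 ≤ l)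
    (hpos : ∀ t, 0 ≤ t → 0 < x t) : MonotoneOn x (Ici 0) := by
  refine monotoneOn_of_hasDerivWithinAt_nonneg (convex_Ici 0)
    (fun t ht ↦ (hx t ht).continuousAt.continuousWithinAt)
    (fun t ht ↦ (hx t (interior_subset ht)).hasDerivWithinAt) fun t ht ↦ ?_
  exact mul_nonneg hl (hpos _ (mul_nonneg hq0 (interior_subset ht))).le

theorem IsSolution.mul_sub_le_sub (hx : IsSolution q l x) (hq0 : 0 ≤ q) (hl : 0 ≤ l)
    (hmono : MonotoneOn x (Ici 0)) {s t : ℝ} (hs : 0 ≤ s) (hst : s ≤ t) :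
    l * x (q * s) * (t - s) ≤ x t - x s := by
  have hderiv : ∀ r ∈ Icc s t, HasDerivAt x (l * x (q * r)) r := fun r hr ↦ hx r (hs.trans hr.1)
  refine (convex_Icc s t).mul_sub_le_image_sub_of_le_deriv
    (fun r hr ↦ (hderiv r hr).continuousAt.continuousWithinAt)
    (fun r hr ↦ (hderiv r (interior_subset hr)).differentiableAt.differentiableWithinAt)
    (fun r hr ↦ ?_) s (left_mem_Icc.mpr hst) t (right_mem_Icc.mpr hst) hst
  rw [interior_Icc] at hr
  rw [(hderiv r (Ioo_subset_Icc_self hr)).deriv]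
  exact mul_le_mul_of_nonneg_left (hmono (mul_nonneg hq0 hs) (mul_nonneg hq0 (hs.trans hr.1.le))
    (mul_le_mul_of_nonneg_left hr.1.le hq0)) hl

theorem ratio_pos (hq0 : 0 ≤ q) (hpos : ∀ t, 0 ≤ t → 0 < x t) {t : ℝ} (ht : 0 ≤ t) :
    0 < ratio q x t :=
  div_pos (hpos t ht) (hpos _ (mul_nonneg hq0 ht))

theorem IsSolution.hasDerivAt_ratio (hx : IsSolution q l x) (hq0 : 0 ≤ q)
    (hpos : ∀ t, 0 ≤ t → 0 < x t) {t : ℝ} (ht : 0 ≤ t) :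
    HasDerivAt (ratio q x) (l * (ratio q x (q * t) - q * ratio q x t) / ratio q x (q * t)) t := by
  have hqt : 0 ≤ q * t := mul_nonneg hq0 ht
  have hscaled : HasDerivAt (fun s ↦ x (q * s)) (l * x (q * (q * t)) * q) t :=
    (hx _ hqt).comp t ((hasDerivAt_id t).const_mul q |>.congr_deriv (mul_one q))
  have h1 := hpos t ht
  have h2 := hpos _ hqt
  have h3 := hpos _ (mul_nonneg hq0 hqt)
  refine ((hx t ht).div hscaled h2.ne').congr_deriv ?_
  unfold ratio
  -- otherwise `field_simp` turns `q * (q * t)` into `q ^ 2 * t` and no longer sees `h3`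
  generalize x (q * (q * t)) = y at h3 ⊢
  field_simp

theorem IsSolution.mul_ratio_lt_ratio_mul (hx : IsSolution q l x) (hq : 0 < q) (hq1 : q < 1)
    (hl : 0 < l) (hpos : ∀ t, 0 ≤ t → 0 < x t) :
    ∀ t, 0 ≤ t → q * ratio q x t < ratio q x (q * t) := by
  let R' t := l * (ratio q x (q * t) - q * ratio q x t) / ratio q x (q * t)
  have hR' t (ht : 0 ≤ t) : HasDerivAt (ratio q x) (R' t) t := hx.hasDerivAt_ratio hq.le hpos ht
  have hgap t (ht : 0 ≤ t) : HasDerivAt (fun s ↦ ratio q x (q * s) - q * ratio q x s)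
      (q * R' (q * t) - q * R' t) t := by
    have hscaled := (hR' _ (mul_nonneg hq.le ht)).comp t ((hasDerivAt_id t).const_mul q)
    exact (hscaled.sub ((hR' t ht).const_mul q)).congr_deriv (by ring)
  have h0 : 0 < ratio q x (q * 0) - q * ratio q x 0 := by
    simp only [ratio, mul_zero, div_self (hpos 0 le_rfl).ne']
    linarith
  intro t ht
  suffices 0 < ratio q x (q * t) - q * ratio q x t by linarith
  refine pos_of_deriv_pos_at_first_zero hgap h0 (fun c hc hzero hbefore ↦ ?_) t ht
  have hqc : q * c ∈ Ico 0 c := ⟨mul_nonneg hq.le hc.le, mul_lt_of_lt_one_left hc hq1⟩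
  have hR'c : R' c = 0 := by simp only [R', hzero, mul_zero, zero_div]
  rw [hR'c, mul_zero, sub_zero]
  exact mul_pos hq (div_pos (mul_pos hl (hbefore _ hqc)) (ratio_pos hq.le hpos (by positivity)))

theorem IsSolution.strictMonoOn_ratio (hx : IsSolution q l x) (hq : 0 < q) (hq1 : q < 1)
    (hl : 0 < l) (hpos : ∀ t, 0 ≤ t → 0 < x t) : StrictMonoOn (ratio q x) (Ici 0) := by
  have hR' t (ht : 0 ≤ t) := hx.hasDerivAt_ratio hq.le hpos ht
  refine strictMonoOn_of_hasDerivWithinAt_pos (convex_Ici 0)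
    (fun t ht ↦ (hR' t ht).continuousAt.continuousWithinAt)
    (fun t ht ↦ (hR' t (interior_subset ht)).hasDerivWithinAt) fun t ht ↦ ?_
  have ht : 0 ≤ t := interior_subset ht
  have hgap := hx.mul_ratio_lt_ratio_mul hq hq1 hl hpos t ht
  exact div_pos (mul_pos hl (sub_pos.mpr hgap)) (ratio_pos hq.le hpos (mul_nonneg hq.le ht))

theorem IsSolution.mul_le_ratio_sq (hx : IsSolution q l x) (hq : 0 < q) (hq1 : q < 1)
    (hl : 0 < l) (hpos : ∀ t, 0 ≤ t → 0 < x t) {t : ℝ} (ht : 0 ≤ t) :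
    l * (1 - q) * t ≤ ratio q x t ^ 2 := by
  have hqt : 0 ≤ q * t := mul_nonneg hq.le ht
  have hqt_le : q * t ≤ t := mul_le_of_le_one_left ht hq1.le
  have hmvt := hx.mul_sub_le_sub hq.le hl.le (hx.monotoneOn hq.le hl.le hpos) hqt hqt_le
  have hratio := (hx.strictMonoOn_ratio hq hq1 hl hpos).monotoneOn hqt ht hqt_le
  have hxt := hpos t ht
  have hxqt := hpos _ hqt
  unfold ratio at hratio ⊢
  rw [div_le_div_iff₀ (hpos _ (mul_nonneg hq.le hqt)) hxqt] at hratio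
  rw [div_pow, le_div_iff₀ (pow_pos hxqt 2)]
  calc l * (1 - q) * t * x (q * t) ^ 2
      ≤ l * (1 - q) * t * (x t * x (q * (q * t))) := by
        rw [sq]
        exact mul_le_mul_of_nonneg_left hratio (by have := sub_pos.mpr hq1; positivity)
    _ = x t * (l * x (q * (q * t)) * (t - q * t)) := by ring
    _ ≤ x t * (x t - x (q * t)) := mul_le_mul_of_nonneg_left hmvt hxt.le
    _ ≤ x t ^ 2 := by nlinarith

theorem IsSolution.tendsto_ratio_atTop (hx : IsSolution q l x) (hq : 0 < q) (hq1 : q < 1)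
    (hl : 0 < l) (hpos : ∀ t, 0 ≤ t → 0 < x t) : Tendsto (ratio q x) atTop atTop := by
  have hc : 0 < l * (1 - q) := mul_pos hl (sub_pos.mpr hq1)
  refine tendsto_atTop_mono' _ ?_ (Real.tendsto_sqrt_atTop.comp (tendsto_id.const_mul_atTop hc))
  filter_upwards [eventually_ge_atTop 0] with t ht
  rw [Function.comp_apply, id, ← Real.sqrt_sq (ratio_pos hq.le hpos ht).le]
  exact Real.sqrt_le_sqrt (hx.mul_le_ratio_sq hq hq1 hl hpos ht)

end Pantograph

/-- The ratio x(t)/x(qt) of the positive pantograph solution is monotone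
increasing on (0,∞) and tends to infinity. -/
theorem pantograph_ratio_tendsto
    (q l x₀ : ℝ) (hq : 0 < q) (hq1 : q < 1) (hl : 0 < l) (hx₀ : 0 < x₀)
    (x : ℝ → ℝ) (h0 : x 0 = x₀)
    (heq : ∀ t, 0 ≤ t → HasDerivAt x (l * x (q * t)) t) :
    MonotoneOn (fun t => x t / x (q * t)) (Set.Ioi 0) ∧
      Filter.Tendsto (fun t => x t / x (q * t)) Filter.atTop Filter.atTop := by
  have hx : Pantograph.IsSolution q l x := heq
  have hpos := hx.pos hq.le hq1 hl (h0 ▸ hx₀)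
  exact ⟨(hx.strictMonoOn_ratio hq hq1 hl hpos).monotoneOn.mono Ioi_subset_Ici_self,
    hx.tendsto_ratio_atTop hq hq1 hl hpos⟩
end

section
/- Let q ∈ (0,1), λ ≥ 0, and let x : [0,∞) → ℝ be the solution of x'(t) = λ x(qt) with x(0) = x₀ > 0. Then lim_{t→∞} (1/t) log x(t) = 0. -/
open Real Filter

/-- The Lyapunov exponent of the linear pantograph equation is zero:
(1/t) log x(t) → 0. -/
theorem pantograph_lyapunov_zero
    (q l x₀ : ℝ) (hq : 0 < q) (hq1 : q < 1) (hl : 0 ≤ l) (hx₀ : 0 < x₀)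
    (x : ℝ → ℝ) (h0 : x 0 = x₀)
    (heq : ∀ t, 0 ≤ t → HasDerivAt x (l * x (q * t)) t) :
    Filter.Tendsto (fun t => Real.log |x t| / t) Filter.atTop (nhds 0) := by
  have hcont : ∀ t, 0 ≤ t → ContinuousAt x t := fun t ht => (heq t ht).continuousAt
  -- Step 1: x stays above x₀/2
  have hpos : ∀ t, 0 ≤ t → x₀ / 2 < x t := by
    by_contra h
    push_neg at h
    obtain ⟨t₀, ht₀, hxt₀⟩ := h
    set S : Set ℝ := Set.Icc 0 t₀ ∩ x ⁻¹' Set.Iic (x₀ / 2) with hS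
    have hScl : IsClosed S := by
      apply ContinuousOn.preimage_isClosed_of_isClosed
        (fun s hs => (hcont s hs.1).continuousWithinAt) isClosed_Icc isClosed_Iic
    have hSne : S.Nonempty := ⟨t₀, ⟨ht₀, le_rfl⟩, hxt₀⟩
    have hSbdd : BddBelow S := ⟨0, fun s hs => hs.1.1⟩
    set u := sInf S with hu
    have huS : u ∈ S := hScl.csInf_mem hSne hSbdd
    have hu0 : 0 ≤ u := huS.1.1
    have hxu : x u ≤ x₀ / 2 := huS.2
    have hu_pos : 0 < u := by
      rcases hu0.lt_or_eq with h' | h'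
      · exact h'
      · exfalso; rw [← h', h0] at hxu; linarith
    have hbefore : ∀ s, 0 ≤ s → s < u → x₀ / 2 < x s := by
      intro s hs0 hsu
      by_contra hc
      push_neg at hc
      have hsS : s ∈ S := ⟨⟨hs0, hsu.le.trans huS.1.2⟩, hc⟩
      exact absurd (csInf_le hSbdd hsS) (not_le.2 hsu)
    have hmono : MonotoneOn x (Set.Icc 0 u) := by
      apply monotoneOn_of_hasDerivWithinAt_nonneg (convex_Icc 0 u)
        (fun s hs => (hcont s hs.1).continuousWithinAt)
        (f' := fun s => l * x (q * s))
      · intro s hs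
        rw [interior_Icc] at hs
        exact ((heq s hs.1.le).hasDerivWithinAt)
      · intro s hs
        rw [interior_Icc] at hs
        have hqs : q * s < u := lt_of_le_of_lt (by nlinarith [hs.1] : q * s ≤ s) hs.2
        have := hbefore (q * s) (mul_nonneg hq.le hs.1.le) hqs
        have : 0 ≤ x (q * s) := by linarith
        positivity
    have := hmono ⟨le_rfl, hu0⟩ ⟨hu0, le_rfl⟩ hu0
    rw [h0] at this
    linarith
  have hgt0 : ∀ t, 0 ≤ t → 0 < x t := fun t ht => lt_trans (by linarith) (hpos t ht)
  -- monotone on [0, ∞)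
  have hmono : MonotoneOn x (Set.Ici 0) := by
    apply monotoneOn_of_hasDerivWithinAt_nonneg (convex_Ici 0)
      (fun s hs => (hcont s hs).continuousWithinAt)
      (f' := fun s => l * x (q * s))
    · intro s hs
      rw [interior_Ici] at hs
      exact (heq s hs.le).hasDerivWithinAt
    · intro s hs
      rw [interior_Ici] at hs
      exact mul_nonneg hl (hgt0 (q * s) (mul_nonneg hq.le hs.le)).le
  have hge : ∀ t, 0 ≤ t → x₀ ≤ x t := by
    intro t ht
    have := hmono (Set.self_mem_Ici) ht ht
    rwa [h0] at this
  -- Step 2: key inequality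
  have key : ∀ t, 0 ≤ t → x t ≤ x (q * t) * (1 + l * t) := by
    intro t ht
    set C := l * x (q * t) with hC
    have hqt0 : 0 ≤ q * t := by positivity
    have hCnn : 0 ≤ C := mul_nonneg hl (hgt0 _ hqt0).le
    have hqt : q * t ≤ t := by nlinarith
    have hg : MonotoneOn (fun s => C * s - x s) (Set.Icc (q * t) t) := by
      apply monotoneOn_of_hasDerivWithinAt_nonneg (convex_Icc _ _)
        (f' := fun s => C - l * x (q * s))
      · exact (continuous_const.mul continuous_id).continuousOn.sub
          (fun s hs => (hcont s (hqt0.trans hs.1)).continuousWithinAt)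
      · intro s hs
        rw [interior_Icc] at hs
        have hs0 : 0 ≤ s := hqt0.trans hs.1.le
        have : HasDerivAt (fun s => C * s - x s) (C * 1 - l * x (q * s)) s :=
          ((hasDerivAt_id s).const_mul C).sub (heq s hs0)
        simpa using this.hasDerivWithinAt
      · intro s hs
        rw [interior_Icc] at hs
        have hs0 : 0 ≤ s := hqt0.trans hs.1.le
        have hqs : q * s ≤ q * t := by nlinarith [hs.2]
        have hx : x (q * s) ≤ x (q * t) :=
          hmono (Set.mem_Ici.2 (mul_nonneg hq.le hs0)) (Set.mem_Ici.2 hqt0) hqs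
        rw [hC]
        nlinarith
    have h2 := hg ⟨le_rfl, hqt⟩ ⟨hqt, le_rfl⟩ hqt
    simp only [] at h2
    nlinarith [mul_nonneg hCnn hqt0]
  -- Step 3: iterate
  have iter : ∀ n : ℕ, ∀ t, 0 ≤ t → x t ≤ x (q ^ n * t) * (1 + l * t) ^ n := by
    intro n
    induction n with
    | zero => intro t ht; simp
    | succ n ih =>
      intro t ht
      have h1 := key t ht
      have h2 := ih (q * t) (by positivity)
      have e : q ^ n * (q * t) = q ^ (n + 1) * t := by ring
      have hb : (1 + l * (q * t)) ^ n ≤ (1 + l * t) ^ n := by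
        have ha : 0 ≤ l * (q * t) := mul_nonneg hl (mul_nonneg hq.le ht)
        have hb' : l * (q * t) ≤ l * t := by nlinarith [mul_nonneg hl ht]
        exact pow_le_pow_left₀ (by linarith) (by linarith) n
      have hxnn : 0 ≤ x (q ^ (n + 1) * t) := (hgt0 _ (by positivity)).le
      calc x t ≤ x (q * t) * (1 + l * t) := h1
        _ ≤ (x (q ^ (n + 1) * t) * (1 + l * t) ^ n) * (1 + l * t) := by
            apply mul_le_mul_of_nonneg_right _ (by nlinarith)
            calc x (q * t) ≤ x (q ^ n * (q * t)) * (1 + l * (q * t)) ^ n := h2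
              _ = x (q ^ (n + 1) * t) * (1 + l * (q * t)) ^ n := by rw [e]
              _ ≤ x (q ^ (n + 1) * t) * (1 + l * t) ^ n :=
                  mul_le_mul_of_nonneg_left hb hxnn
        _ = x (q ^ (n + 1) * t) * (1 + l * t) ^ (n + 1) := by ring
  -- Step 4: the upper bound
  set c := -Real.log q with hc
  have hc0 : 0 < c := neg_pos.2 (Real.log_neg hq hq1)
  have hx1 : 0 < x 1 := hgt0 1 zero_le_one
  have upper : ∀ t, 1 ≤ t → Real.log (x t) ≤
      Real.log (x 1) + (Real.log t / c + 1) * (Real.log (1 + l) + Real.log t) := by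
    intro t ht
    have ht0 : 0 < t := lt_of_lt_of_le one_pos ht
    set n := ⌈Real.log t / c⌉₊ with hn
    have hlt0 : 0 ≤ Real.log t := Real.log_nonneg ht
    have hnc : Real.log t ≤ n * c := by
      have h := Nat.le_ceil (Real.log t / c)
      calc Real.log t = Real.log t / c * c := (div_mul_cancel₀ _ hc0.ne').symm
        _ ≤ n * c := mul_le_mul_of_nonneg_right h hc0.le
    have hqn : q ^ n * t ≤ 1 := by
      have h1 : Real.log (q ^ n) ≤ Real.log (1 / t) := by
        rw [Real.log_pow, Real.log_div one_ne_zero ht0.ne', Real.log_one]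
        have : (n : ℝ) * Real.log q = -(n * c) := by rw [hc]; ring
        rw [this]
        linarith
      have h2 : q ^ n ≤ 1 / t := by
        rwa [Real.log_le_log_iff (pow_pos hq n) (by positivity)] at h1
      calc q ^ n * t ≤ 1 / t * t := mul_le_mul_of_nonneg_right h2 ht0.le
        _ = 1 := by field_simp
    have h3 : x t ≤ x 1 * (1 + l * t) ^ n := by
      have hxm : x (q ^ n * t) ≤ x 1 :=
        hmono (Set.mem_Ici.2 (by positivity)) (Set.mem_Ici.2 zero_le_one) hqn
      exact le_trans (iter n t ht0.le)
        (mul_le_mul_of_nonneg_right hxm (pow_nonneg (by nlinarith) n))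
    have h4 : Real.log (x t) ≤ Real.log (x 1) + n * Real.log (1 + l * t) := by
      calc Real.log (x t) ≤ Real.log (x 1 * (1 + l * t) ^ n) :=
            Real.log_le_log (hgt0 t ht0.le) h3
        _ = Real.log (x 1) + n * Real.log (1 + l * t) := by
            rw [Real.log_mul hx1.ne' (by positivity), Real.log_pow]
    have h5 : Real.log (1 + l * t) ≤ Real.log (1 + l) + Real.log t := by
      have h6 : (1 : ℝ) + l * t ≤ (1 + l) * t := by nlinarith
      calc Real.log (1 + l * t) ≤ Real.log ((1 + l) * t) :=
            Real.log_le_log (by nlinarith) h6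
        _ = Real.log (1 + l) + Real.log t := Real.log_mul (by positivity) ht0.ne'
    have hn2 : (n : ℝ) ≤ Real.log t / c + 1 :=
      (Nat.ceil_lt_add_one (by positivity)).le
    have hlog1 : 0 ≤ Real.log (1 + l * t) := Real.log_nonneg (by nlinarith)
    have h7 : (n : ℝ) * Real.log (1 + l * t) ≤
        (Real.log t / c + 1) * (Real.log (1 + l) + Real.log t) :=
      mul_le_mul hn2 h5 hlog1 (by positivity)
    linarith
  -- Step 5: limits
  have l1 : Tendsto (fun t : ℝ => 1 / t) atTop (nhds 0) := by
    simpa [one_div] using tendsto_inv_atTop_zero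
  have l2 : Tendsto (fun t : ℝ => Real.log t / t) atTop (nhds 0) := by
    simpa using Real.tendsto_pow_log_div_mul_add_atTop 1 0 1 one_ne_zero
  have l3 : Tendsto (fun t : ℝ => (Real.log t) ^ 2 / t) atTop (nhds 0) := by
    simpa using Real.tendsto_pow_log_div_mul_add_atTop 1 0 2 one_ne_zero
  have hU : Tendsto (fun t : ℝ =>
      (Real.log (x 1) + (Real.log t / c + 1) * (Real.log (1 + l) + Real.log t)) / t)
      atTop (nhds 0) := by
    have comb : Tendsto (fun t : ℝ =>
        (Real.log (x 1) + Real.log (1 + l)) * (1 / t) +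
        (Real.log (1 + l) / c + 1) * (Real.log t / t) +
        (1 / c) * ((Real.log t) ^ 2 / t)) atTop (nhds 0) := by
      have := ((l1.const_mul (Real.log (x 1) + Real.log (1 + l))).add
        (l2.const_mul (Real.log (1 + l) / c + 1))).add (l3.const_mul (1 / c))
      simpa using this
    apply comb.congr'
    filter_upwards [eventually_gt_atTop (0 : ℝ)] with t ht
    field_simp
    ring
  have llow : Tendsto (fun t : ℝ => Real.log x₀ / t) atTop (nhds 0) := by
    simpa [div_eq_mul_inv] using tendsto_inv_atTop_zero.const_mul (Real.log x₀)
  apply tendsto_of_tendsto_of_tendsto_of_le_of_le' llow hU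
  · filter_upwards [eventually_ge_atTop (1 : ℝ)] with t ht
    have ht0 : 0 < t := lt_of_lt_of_le one_pos ht
    have habs : |x t| = x t := abs_of_pos (hgt0 t ht0.le)
    rw [habs]
    have h : Real.log x₀ ≤ Real.log (x t) := Real.log_le_log hx₀ (hge t ht0.le)
    gcongr
  · filter_upwards [eventually_ge_atTop (1 : ℝ)] with t ht
    have ht0 : 0 < t := lt_of_lt_of_le one_pos ht
    have habs : |x t| = x t := abs_of_pos (hgt0 t ht0.le)
    rw [habs]
    have h := upper t ht
    gcongr
end

section
/- Let q ∈ (0,1), λ > 0, and let x : [0,∞) → ℝ be continuous with x(0) = x₀ > 0 and x(t) = x₀ − λ ∫_0^t x(qs) ds for all t ≥ 0. Then there exists t* ∈ (0, 1/(λ(1−q))] with x(t*) = 0; in particular x changes sign. -/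
open MeasureTheory Set Filter Topology

/-- The negative-coefficient pantograph solution hits zero by time 1/(λ(1−q))
and changes sign. -/
theorem pantograph_hits_zero
    (q l x₀ : ℝ) (hq : 0 < q) (hq1 : q < 1) (hl : 0 < l) (hx₀ : 0 < x₀)
    (x : ℝ → ℝ) (hx : ContinuousOn x (Set.Ici 0)) (h0 : x 0 = x₀)
    (heq : ∀ t, 0 ≤ t → x t = x₀ - l * ∫ s in (0:ℝ)..t, x (q * s)) :
    (∃ t₁ ∈ Set.Ioc 0 (1 / (l * (1 - q))), x t₁ = 0) ∧ ∃ s, 0 ≤ s ∧ x s < 0 := by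
  have h1q : 0 < 1 - q := by linarith
  have hlq : 0 < l * (1 - q) := by positivity
  set T : ℝ := 1 / (l * (1 - q)) with hTdef
  have hT0 : 0 < T := by positivity
  set f : ℝ → ℝ := fun s => x (q * s) with hfdef
  have hfc : ContinuousOn f (Ici 0) := by
    apply hx.comp (continuous_const.mul continuous_id).continuousOn
    intro s hs
    exact mul_nonneg hq.le hs
  have hint : ∀ a b : ℝ, 0 ≤ a → 0 ≤ b → IntervalIntegrable f volume a b := by
    intro a b ha hb
    apply (hfc.mono ?_).intervalIntegrable
    intro s hs
    rcases Set.mem_uIcc.1 hs with h | h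
    · exact le_trans ha h.1
    · exact le_trans hb h.1
  have hdiff : ∀ a b : ℝ, 0 ≤ a → a ≤ b → x b = x a - l * ∫ s in a..b, f s := by
    intro a b ha hab
    have h1 := heq a ha
    have h2 := heq b (le_trans ha hab)
    have h3 : (∫ s in (0:ℝ)..a, f s) + (∫ s in a..b, f s) = ∫ s in (0:ℝ)..b, f s :=
      intervalIntegral.integral_add_adjacent_intervals (hint 0 a le_rfl ha)
        (hint a b ha (le_trans ha hab))
    rw [h1, h2, ← h3]
    ring
  -- monotonicity under nonnegativity of f on [a,b]
  have hmono : ∀ a b : ℝ, 0 ≤ a → a ≤ b → (∀ s ∈ Icc a b, 0 ≤ f s) → x b ≤ x a := by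
    intro a b ha hab hpos
    have h1 := hdiff a b ha hab
    have h2 : 0 ≤ ∫ s in a..b, f s := intervalIntegral.integral_nonneg hab hpos
    nlinarith
  -- key estimate: if x nonneg on [0,T], then x T ≤ 0
  have hkey : (∀ s ∈ Icc (0:ℝ) T, 0 ≤ x s) → x T ≤ 0 := by
    intro hpos
    set t₀ : ℝ := q * T with ht₀def
    have ht₀0 : 0 < t₀ := by positivity
    have ht₀T : t₀ < T := by
      rw [ht₀def]; nlinarith
    have hlow : ∀ s ∈ Icc t₀ T, x t₀ ≤ f s := by
      intro s hs
      have hqs0 : 0 ≤ q * s := mul_nonneg hq.le (le_trans ht₀0.le hs.1)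
      have hqst : q * s ≤ t₀ := by
        rw [ht₀def]; exact mul_le_mul_of_nonneg_left hs.2 hq.le
      apply hmono (q * s) t₀ hqs0 hqst
      intro u hu
      apply hpos
      constructor
      · exact mul_nonneg hq.le (le_trans hqs0 hu.1)
      · calc q * u ≤ q * t₀ := mul_le_mul_of_nonneg_left hu.2 hq.le
          _ ≤ t₀ := by nlinarith
          _ ≤ T := ht₀T.le
    have hI : (T - t₀) * x t₀ ≤ ∫ s in t₀..T, f s := by
      have := intervalIntegral.integral_mono_on (μ := volume) ht₀T.le
        (intervalIntegrable_const (c := x t₀)) (hint t₀ T ht₀0.le hT0.le) hlow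
      simpa [smul_eq_mul, mul_comm] using this
    have hd := hdiff t₀ T ht₀0.le ht₀T.le
    have hcoef : l * (T - t₀) = 1 := by
      rw [ht₀def, hTdef]; field_simp
    have h5 : l * ((T - t₀) * x t₀) ≤ l * ∫ s in t₀..T, f s :=
      mul_le_mul_of_nonneg_left hI hl.le
    have h6 : l * ((T - t₀) * x t₀) = x t₀ := by rw [← mul_assoc, hcoef, one_mul]
    linarith
  -- Part 1
  have part1 : ∃ t₁ ∈ Set.Ioc 0 T, x t₁ = 0 := by
    have hz : ∃ t ∈ Ioc (0:ℝ) T, x t ≤ 0 := by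
      by_contra hcon
      push_neg at hcon
      have hpos : ∀ s ∈ Icc (0:ℝ) T, 0 ≤ x s := by
        intro s hs
        rcases eq_or_lt_of_le hs.1 with h | h
        · rw [← h, h0]; exact hx₀.le
        · exact (hcon s ⟨h, hs.2⟩).le
      have h1 := hkey hpos
      have h2 := hcon T ⟨hT0, le_rfl⟩
      linarith
    obtain ⟨t, ht, hxt⟩ := hz
    have hsub : Icc (0:ℝ) t ⊆ Ici 0 := fun s hs => hs.1
    have hivt := intermediate_value_Icc' ht.1.le (hx.mono hsub)
    have h0mem : (0:ℝ) ∈ Icc (x t) (x 0) := ⟨hxt, by rw [h0]; exact hx₀.le⟩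
    obtain ⟨t₁, ht₁, hxt₁⟩ := hivt h0mem
    refine ⟨t₁, ⟨?_, le_trans ht₁.2 ht.2⟩, hxt₁⟩
    rcases eq_or_lt_of_le ht₁.1 with h | h
    · exfalso; rw [← h, h0] at hxt₁; linarith
    · exact h
  refine ⟨part1, ?_⟩
  -- Part 2
  by_contra hneg
  push_neg at hneg
  have hnn : ∀ s : ℝ, 0 ≤ s → 0 ≤ x s := hneg
  have hxT : x T = 0 := by
    have h1 := hkey (fun s hs => hnn s hs.1)
    have h2 := hnn T hT0.le
    linarith
  have hzero : ∀ t : ℝ, T ≤ t → x t = 0 := by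
    intro t ht
    have h1 : x t ≤ x T := by
      apply hmono T t hT0.le ht
      intro s hs
      exact hnn (q * s) (mul_nonneg hq.le (le_trans hT0.le hs.1))
    have h2 := hnn t (le_trans hT0.le ht)
    linarith [hxT ▸ h1]
  -- derivative of x at positive points
  have hderiv : ∀ t : ℝ, 0 < t → HasDerivAt x (-(l * f t)) t := by
    intro t ht
    have hct : ContinuousAt f t := by
      have hx' : ContinuousAt x (q * t) := hx.continuousAt (Ici_mem_nhds (by positivity))
      exact hx'.comp ((continuous_const.mul continuous_id).continuousAt)
    have hmeas : StronglyMeasurableAtFilter f (𝓝 t) volume := by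
      refine ContinuousAt.stronglyMeasurableAtFilter isOpen_Ioi ?_ t ht
      intro u hu
      have hx' : ContinuousAt x (q * u) :=
        hx.continuousAt (Ici_mem_nhds (by exact mul_pos hq hu))
      exact hx'.comp ((continuous_const.mul continuous_id).continuousAt)
    have hI : HasDerivAt (fun u => ∫ s in (0:ℝ)..u, f s) (f t) t :=
      intervalIntegral.integral_hasDerivAt_right (hint 0 t le_rfl ht.le) hmeas hct
    have hD : HasDerivAt (fun u => x₀ - l * ∫ s in (0:ℝ)..u, f s) (-(l * f t)) t := by
      simpa using (hI.const_mul l).const_sub x₀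
    apply hD.congr_of_eventuallyEq
    filter_upwards [Ioi_mem_nhds ht] with u hu
    exact heq u (le_of_lt hu)
  -- propagation of the zero set
  have hprop : ∀ n : ℕ, ∀ t : ℝ, q ^ n * T < t → x t = 0 := by
    intro n
    induction n with
    | zero => intro t ht; exact hzero t (by simpa using ht.le)
    | succ n ih =>
      intro t ht
      set s : ℝ := t / q with hsdef
      have hts : t = q * s := by rw [hsdef]; field_simp
      have hqnT : 0 < q ^ n * T := by positivity
      have hsgt : q ^ n * T < s := by
        rw [hsdef, lt_div_iff₀ hq]
        calc q ^ n * T * q = q ^ (n+1) * T := by ring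
          _ < t := ht
      have hs0 : 0 < s := lt_trans hqnT hsgt
      have h1 : HasDerivAt x 0 s := by
        apply (hasDerivAt_const s (0:ℝ)).congr_of_eventuallyEq
        filter_upwards [Ioi_mem_nhds hsgt] with u hu
        exact ih u hu
      have h2 := hderiv s hs0
      have h3 : (0:ℝ) = -(l * f s) := h1.unique h2
      have h4 : f s = 0 := by
        have hls : l * f s = 0 := by linarith
        exact (mul_eq_zero.1 hls).resolve_left hl.ne'
      rw [hts]
      exact h4
  -- continuity contradiction at 0
  have hxzero : x 0 = 0 := by
    have hseq : Tendsto (fun n : ℕ => 2 * (q ^ n * T)) atTop (𝓝 0) := by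
      have : Tendsto (fun n : ℕ => q ^ n) atTop (𝓝 0) :=
        tendsto_pow_atTop_nhds_zero_of_lt_one hq.le hq1
      have h2 := (this.mul_const T).const_mul 2
      simpa using h2
    have hcont : ContinuousWithinAt x (Ici 0) 0 := hx 0 Set.self_mem_Ici
    have hmem : ∀ n : ℕ, (2 * (q ^ n * T)) ∈ Ici (0:ℝ) := by
      intro n; exact mem_Ici.2 (by positivity)
    have htend : Tendsto (fun n : ℕ => x (2 * (q ^ n * T))) atTop (𝓝 (x 0)) := by
      apply hcont.tendsto.comp
      rw [tendsto_nhdsWithin_iff]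
      exact ⟨hseq, Eventually.of_forall hmem⟩
    have hval : ∀ n : ℕ, x (2 * (q ^ n * T)) = 0 := by
      intro n
      apply hprop n
      have : 0 < q ^ n * T := by positivity
      linarith
    have : Tendsto (fun _ : ℕ => (0:ℝ)) atTop (𝓝 (x 0)) := by
      simpa [hval] using htend
    exact tendsto_nhds_unique this tendsto_const_nhds
  rw [h0] at hxzero
  linarith
end

section
/- Let q ∈ (0,1), a > 0, F : ℝ → ℝ of class C^k, η : [qa, a] → ℝ continuous, and let x : [qa, ∞) → ℝ be the solution of x'(t) = F(x(qt)) with x = η on [qa, a]. Then for every integer n with 0 ≤ n ≤ k, x is of class C^{n+1} on the open interval (a q^{-n}, a q^{-(n+1)}). -/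
private lemma pantograph_aux_step {s : Set ℝ} (hs : IsOpen s) (m : ℕ) {x g : ℝ → ℝ}
    (h : ∀ t ∈ s, HasDerivAt x (g t) t) (hg : ContDiffOn ℝ m g s) :
    ContDiffOn ℝ (m + 1) x s := by
  rw [contDiffOn_succ_iff_deriv_of_isOpen hs]
  exact ⟨fun t ht => ((h t ht).differentiableAt).differentiableWithinAt,
    fun h' => absurd h' (by simp),
    hg.congr (fun t ht => (h t ht).deriv)⟩

/-- Gain of regularity: if F is Cᵏ, the pantograph solution is C^{n+1} on the
open interval (a q^{-n}, a q^{-(n+1)}) for each n ≤ k. -/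
theorem pantograph_regularity_gain
    (q a : ℝ) (hq : 0 < q) (hq1 : q < 1) (ha : 0 < a)
    (k : ℕ) (F : ℝ → ℝ) (hF : ContDiff ℝ k F)
    (η : ℝ → ℝ) (hη : ContinuousOn η (Set.Icc (q * a) a))
    (x : ℝ → ℝ) (hx : ContinuousOn x (Set.Ici (q * a)))
    (hinit : ∀ t ∈ Set.Icc (q * a) a, x t = η t)
    (heq : ∀ t, a < t → HasDerivAt x (F (x (q * t))) t) :
    ∀ n : ℕ, n ≤ k →
      ContDiffOn ℝ (n + 1) x (Set.Ioo (a / q ^ n) (a / q ^ (n + 1))) := by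
  have hqn : ∀ n : ℕ, 0 < q ^ n := fun n => pow_pos hq n
  -- everything in the n-th interval is > a
  have hgt : ∀ n : ℕ, ∀ t ∈ Set.Ioo (a / q ^ n) (a / q ^ (n + 1)), a < t := by
    intro n t ht
    have h1 : a ≤ a / q ^ n := by
      rw [le_div_iff₀ (hqn n)]
      nlinarith [pow_le_one₀ hq.le hq1.le (n := n)]
    exact lt_of_le_of_lt h1 ht.1
  -- scaling maps interval n+1 into interval n
  have hmap : ∀ n : ℕ, Set.MapsTo (fun t => q * t)
      (Set.Ioo (a / q ^ (n + 1)) (a / q ^ (n + 2)))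
      (Set.Ioo (a / q ^ n) (a / q ^ (n + 1))) := by
    intro n t ht
    constructor
    · have : a / q ^ n = q * (a / q ^ (n + 1)) := by
        field_simp; ring
      rw [this]
      exact (mul_lt_mul_iff_right₀ hq).2 ht.1
    · have : a / q ^ (n + 1) = q * (a / q ^ (n + 2)) := by
        field_simp; ring
      rw [this]
      exact (mul_lt_mul_iff_right₀ hq).2 ht.2
  intro n
  induction n with
  | zero =>
    intro _
    refine pantograph_aux_step isOpen_Ioo 0
      (fun t ht => heq t (hgt 0 t ht)) ?_
    -- C⁰ means continuity of t ↦ F (x (q * t))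
    simp only [Nat.cast_zero, contDiffOn_zero]
    refine hF.continuous.comp_continuousOn (hx.comp (continuous_const.mul continuous_id).continuousOn ?_)
    intro t ht
    have : a < t := hgt 0 t ht
    have : q * a ≤ q * t := by nlinarith
    simpa using this
  | succ n ih =>
    intro hnk
    have ihn : ContDiffOn ℝ (n + 1) x (Set.Ioo (a / q ^ n) (a / q ^ (n + 1))) :=
      ih (le_trans (Nat.le_succ n) hnk)
    have hinner : ContDiffOn ℝ (n + 1) (fun t => x (q * t))
        (Set.Ioo (a / q ^ (n + 1)) (a / q ^ (n + 2))) :=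
      ihn.comp ((contDiff_const.mul contDiff_id).contDiffOn) (hmap n)
    have hFk : ContDiff ℝ ((n : ℕ∞) + 1) F := by
      refine hF.of_le ?_
      exact_mod_cast (Nat.cast_le (α := ℕ∞)).2 hnk
    have hg : ContDiffOn ℝ ((n : ℕ∞) + 1) (fun t => F (x (q * t)))
        (Set.Ioo (a / q ^ (n + 1)) (a / q ^ (n + 2))) := by
      exact hFk.comp_contDiffOn (by exact_mod_cast hinner)
    have := pantograph_aux_step isOpen_Ioo (n + 1)
      (fun t ht => heq t (hgt (n + 1) t ht)) (by exact_mod_cast hg)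
    convert this using 2 <;> push_cast <;> ring
end
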